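/- arXiv:1510.06173 — 3 statements merged into one kernel-verified Lean document; each statement's English description precedes it below -/
import Mathlib

section
/- Let u_0, ..., u_N = u_0 be points in ℝ² (indices mod N) with q_j := |u_j − u_{j-1}| > 0, τ_j := (u_j − u_{j-1})/q_j. If the points evolve in time by the ODE system u̇_j + (2/(q_j + q_{j+1}))(τ_j − τ_{j+1}) = r_j for given vectors r_j, then q̇_j = τ_j · (r_j − r_{j-1}) − |τ_{j+1} − τ_j|²/(q_j + q_{j+1}) − |τ_{j-1} − τ_j|²/(q_j + q_{j-1}). -/
/-!
The edge length `q_j = ‖u_j - u_{j-1}‖` has derivative `⟪τ_j, u̇_j - u̇_{j-1}⟫`. Substituting the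
ODE for `u̇_j` and `u̇_{j-1}`, the curvature terms collapse because the tangents are unit vectors,
so `⟪τ_j, τ_j - τ_k⟫ = ‖τ_k - τ_j‖² / 2`.
-/

open scoped RealInnerProductSpace

theorem HasDerivAt.norm {F : Type*} [NormedAddCommGroup F] [InnerProductSpace ℝ F]
    {f : ℝ → F} {f' : F} {x : ℝ} (hf : HasDerivAt f f' x) (hx : f x ≠ 0) :
    HasDerivAt (‖f ·‖) ⟪‖f x‖⁻¹ • f x, f'⟫ x := by
  have hpos : 0 < ‖f x‖ := norm_pos_iff.mpr hx
  have hsqrt := hf.norm_sq.sqrt (by positivity)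
  simp only [Real.sqrt_sq (norm_nonneg _)] at hsqrt
  convert hsqrt using 1
  rw [real_inner_smul_left]
  field_simp

theorem real_inner_self_sub_eq_half_norm_sub_sq {F : Type*} [NormedAddCommGroup F]
    [InnerProductSpace ℝ F] {a b : F} (h : ‖a‖ = ‖b‖) :
    ⟪a, a - b⟫ = ‖b - a‖ ^ 2 / 2 := by
  rw [norm_sub_sq_real, inner_sub_right, real_inner_self_eq_norm_sq, h, real_inner_comm]
  ring

theorem discrete_length_element_identity_general (N : ℕ)
    (u du r : ZMod N → ℝ → EuclideanSpace ℝ (Fin 2))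
    (q : ZMod N → ℝ → ℝ) (τ : ZMod N → ℝ → EuclideanSpace ℝ (Fin 2))
    (hq : ∀ j s, q j s = ‖u j s - u (j - 1) s‖)
    (hτ : ∀ j s, τ j s = (q j s)⁻¹ • (u j s - u (j - 1) s))
    (hqpos : ∀ j s, 0 < q j s)
    (hdu : ∀ j s, HasDerivAt (fun t' => u j t') (du j s) s)
    (hode : ∀ j s, du j s + (2 / (q j s + q (j + 1) s)) • (τ j s - τ (j + 1) s) = r j s)
    (t : ℝ) :
    ∀ j, HasDerivAt (fun t' => q j t')
      (⟪τ j t, r j t - r (j - 1) t⟫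
        - ‖τ (j + 1) t - τ j t‖ ^ 2 / (q j t + q (j + 1) t)
        - ‖τ (j - 1) t - τ j t‖ ^ 2 / (q j t + q (j - 1) t)) t := by
  intro j
  have hunit : ∀ k, ‖τ k t‖ = 1 := fun k => by
    rw [hτ, norm_smul, ← hq, norm_inv, Real.norm_of_nonneg (hqpos k t).le,
      inv_mul_cancel₀ (hqpos k t).ne']
  have hlength : HasDerivAt (q j ·) ⟪τ j t, du j t - du (j - 1) t⟫ t := by
    have hedge : u j t - u (j - 1) t ≠ 0 := norm_pos_iff.mp (hq j t ▸ hqpos j t)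
    have hedge_deriv : HasDerivAt (fun s => u j s - u (j - 1) s) (du j t - du (j - 1) t) t :=
      (hdu j t).sub (hdu (j - 1) t)
    simpa only [← hq, ← hτ] using hedge_deriv.norm hedge
  have hdu_j := eq_sub_of_add_eq (hode j t)
  have hdu_prev := eq_sub_of_add_eq (hode (j - 1) t)
  rw [sub_add_cancel, add_comm (q (j - 1) t)] at hdu_prev
  convert hlength using 1
  have hnext : ⟪τ j t, τ j t - τ (j + 1) t⟫ = ‖τ (j + 1) t - τ j t‖ ^ 2 / 2 :=
    real_inner_self_sub_eq_half_norm_sub_sq (by rw [hunit, hunit])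
  have hprev : ⟪τ j t, τ (j - 1) t - τ j t⟫ = -(‖τ (j - 1) t - τ j t‖ ^ 2 / 2) := by
    rw [← real_inner_self_sub_eq_half_norm_sub_sq (by rw [hunit, hunit]), ← inner_neg_right,
      neg_sub]
  rw [hdu_j, hdu_prev, sub_sub_sub_comm, inner_sub_right _ (r j t - r (j - 1) t),
    inner_sub_right _ (_ • _), real_inner_smul_right, real_inner_smul_right, hnext, hprev]
  ring

/-- Discrete length-element identity (4.6): for a polygon with vertices `u_j` evolving by
`u̇_j + (2/(q_j+q_{j+1}))(τ_j - τ_{j+1}) = r_j`, the edge lengths satisfy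
`q̇_j = τ_j·(r_j - r_{j-1}) - |τ_{j+1}-τ_j|²/(q_j+q_{j+1}) - |τ_{j-1}-τ_j|²/(q_j+q_{j-1})`. -/
theorem discrete_length_element_identity (N : ℕ) (hN : 0 < N)
    (u du r : ZMod N → ℝ → EuclideanSpace ℝ (Fin 2))
    (q : ZMod N → ℝ → ℝ) (τ : ZMod N → ℝ → EuclideanSpace ℝ (Fin 2))
    (hq : ∀ j s, q j s = ‖u j s - u (j - 1) s‖)
    (hτ : ∀ j s, τ j s = (q j s)⁻¹ • (u j s - u (j - 1) s))
    (hqpos : ∀ j s, 0 < q j s)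
    (hdu : ∀ j s, HasDerivAt (fun t' => u j t') (du j s) s)
    (hode : ∀ j s, du j s + (2 / (q j s + q (j + 1) s)) • (τ j s - τ (j + 1) s) = r j s)
    (t : ℝ) :
    ∀ j, HasDerivAt (fun t' => q j t')
      (⟪τ j t, r j t - r (j - 1) t⟫
        - ‖τ (j + 1) t - τ j t‖ ^ 2 / (q j t + q (j + 1) t)
        - ‖τ (j - 1) t - τ j t‖ ^ 2 / (q j t + q (j - 1) t)) t :=
  discrete_length_element_identity_general N u du r q τ hq hτ hqpos hdu hode t
end

section
/- Under the hypotheses of the discrete evolution u̇_j + (2/(q_j+q_{j+1}))(τ_j − τ_{j+1}) = r_j, the derivative of the edge length can also be written q̇_j = τ_j · (r_j − r_{j-1}) − ((q_j+q_{j+1})/4)|u̇_j − r_j|² − ((q_j+q_{j-1})/4)|u̇_{j-1} − r_{j-1}|². -/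
/-!
Write `a = u̇_j - r_j` and `b = u̇_{j-1} - r_{j-1}`. Differentiating the length gives
`q̇_j = τ_j · (u̇_j - u̇_{j-1}) = τ_j · (r_j - r_{j-1}) + τ_j · a - τ_j · b`.
The evolution equation says that consecutive tangents differ by a multiple of these vectors,
`τ_{j+1} - τ_j = ((q_j + q_{j+1})/2) a` and `τ_{j-1} - τ_j = -((q_{j-1} + q_j)/2) b`,
and since all tangents are unit vectors, expanding `|τ_j + c x|² = |τ_j|²` expresses
`τ_j · x` through `|x|²`.
-/

open scoped RealInnerProductSpace

section InnerProductSpace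

variable {E : Type*} [NormedAddCommGroup E] [InnerProductSpace ℝ E]

theorem HasDerivAt.norm_of_ne_zero {f : ℝ → E} {f' : E} {t : ℝ} (hf : HasDerivAt f f' t)
    (h0 : f t ≠ 0) : HasDerivAt (fun s => ‖f s‖) ⟪‖f t‖⁻¹ • f t, f'⟫ t := by
  have hpos : 0 < ‖f t‖ := norm_pos_iff.mpr h0
  have hsqrt := hf.norm_sq.sqrt (pow_ne_zero 2 hpos.ne')
  simp only [Real.sqrt_sq (norm_nonneg _)] at hsqrt
  convert hsqrt using 1
  rw [real_inner_smul_left]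
  field_simp

theorem inner_eq_of_norm_eq_of_sub_eq_smul {v w a : E} {c : ℝ} (hvw : ‖v‖ = ‖w‖) (hc : c ≠ 0)
    (h : w - v = c • a) : ⟪v, a⟫ = -(c / 2) * ‖a‖ ^ 2 := by
  have hw : w = v + c • a := by rw [← h, add_sub_cancel]
  have hexp : ‖w‖ ^ 2 = ‖v‖ ^ 2 + 2 * c * ⟪v, a⟫ + c ^ 2 * ‖a‖ ^ 2 := by
    rw [hw, norm_add_sq_real, real_inner_smul_right, norm_smul, mul_pow, Real.norm_eq_abs,
      sq_abs]
    ring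
  rw [← hvw] at hexp
  have hfactor : c * (2 * ⟪v, a⟫ + c * ‖a‖ ^ 2) = 0 := by linear_combination -hexp
  linear_combination (mul_eq_zero.mp hfactor).resolve_left hc / 2

end InnerProductSpace

theorem sub_eq_smul_of_add_two_div_smul_sub_eq {V : Type*} [AddCommGroup V] [Module ℝ V]
    {x y v w : V} {Q : ℝ} (hQ : Q ≠ 0) (h : x + (2 / Q) • (v - w) = y) :
    w - v = (Q / 2) • (x - y) := by
  have hQ2 : Q / 2 * (2 / Q) = 1 := by field_simp
  rw [← h, sub_add_cancel_left, smul_neg, smul_smul, hQ2, one_smul, neg_sub]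

theorem discrete_length_element_identity_bis_general (N : ℕ)
    (u du r : ZMod N → ℝ → EuclideanSpace ℝ (Fin 2))
    (q : ZMod N → ℝ → ℝ) (τ : ZMod N → ℝ → EuclideanSpace ℝ (Fin 2))
    (hq : ∀ j s, q j s = ‖u j s - u (j - 1) s‖)
    (hτ : ∀ j s, τ j s = (q j s)⁻¹ • (u j s - u (j - 1) s))
    (hqpos : ∀ j s, 0 < q j s)
    (hdu : ∀ j s, HasDerivAt (fun t' => u j t') (du j s) s)
    (hode : ∀ j s, du j s + (2 / (q j s + q (j + 1) s)) • (τ j s - τ (j + 1) s) = r j s)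
    (t : ℝ) :
    ∀ j, HasDerivAt (fun t' => q j t')
      (⟪τ j t, r j t - r (j - 1) t⟫
        - (q j t + q (j + 1) t) / 4 * ‖du j t - r j t‖ ^ 2
        - (q j t + q (j - 1) t) / 4 * ‖du (j - 1) t - r (j - 1) t‖ ^ 2) t := by
  intro j
  have hedge : ∀ k, u k t - u (k - 1) t ≠ 0 := fun k => norm_pos_iff.mp (hq k t ▸ hqpos k t)
  have hunit : ∀ k, ‖τ k t‖ = 1 := fun k => by
    rw [hτ, hq]
    exact norm_smul_inv_norm (hedge k)
  have hderiv : HasDerivAt (fun s => q j s) ⟪τ j t, du j t - du (j - 1) t⟫ t := by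
    have hdiff : HasDerivAt (fun s => u j s - u (j - 1) s) (du j t - du (j - 1) t) t :=
      (hdu j t).sub (hdu (j - 1) t)
    simp only [hq, hτ]
    exact hdiff.norm_of_ne_zero (hedge j)
  have hQ : q j t + q (j + 1) t ≠ 0 := (add_pos (hqpos j t) (hqpos (j + 1) t)).ne'
  have hP : q (j - 1) t + q j t ≠ 0 := (add_pos (hqpos (j - 1) t) (hqpos j t)).ne'
  have hnext := sub_eq_smul_of_add_two_div_smul_sub_eq hQ (hode j t)
  have hode_prev := hode (j - 1) t
  rw [sub_add_cancel] at hode_prev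
  have hprev := sub_eq_smul_of_add_two_div_smul_sub_eq hP hode_prev
  have ha := inner_eq_of_norm_eq_of_sub_eq_smul ((hunit j).trans (hunit (j + 1)).symm)
    (div_ne_zero hQ two_ne_zero) hnext
  have hb := inner_eq_of_norm_eq_of_sub_eq_smul ((hunit j).trans (hunit (j - 1)).symm)
    (neg_ne_zero.mpr (div_ne_zero hP two_ne_zero))
    (by rw [← neg_sub, hprev, neg_smul])
  have hsplit : du j t - du (j - 1) t
      = (r j t - r (j - 1) t) + (du j t - r j t) - (du (j - 1) t - r (j - 1) t) := by abel
  convert hderiv using 1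
  rw [hsplit, inner_sub_right (τ j t) (_ + _), inner_add_right, ha, hb]
  ring

/-- Discrete length-element identity (4.6bis): under the discrete evolution
`u̇_j + (2/(q_j+q_{j+1}))(τ_j - τ_{j+1}) = r_j`, the edge lengths satisfy
`q̇_j = τ_j·(r_j - r_{j-1}) - ((q_j+q_{j+1})/4)|u̇_j - r_j|²
  - ((q_j+q_{j-1})/4)|u̇_{j-1} - r_{j-1}|²`. -/
theorem discrete_length_element_identity_bis (N : ℕ) (hN : 0 < N)
    (u du r : ZMod N → ℝ → EuclideanSpace ℝ (Fin 2))
    (q : ZMod N → ℝ → ℝ) (τ : ZMod N → ℝ → EuclideanSpace ℝ (Fin 2))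
    (hq : ∀ j s, q j s = ‖u j s - u (j - 1) s‖)
    (hτ : ∀ j s, τ j s = (q j s)⁻¹ • (u j s - u (j - 1) s))
    (hqpos : ∀ j s, 0 < q j s)
    (hdu : ∀ j s, HasDerivAt (fun t' => u j t') (du j s) s)
    (hode : ∀ j s, du j s + (2 / (q j s + q (j + 1) s)) • (τ j s - τ (j + 1) s) = r j s)
    (t : ℝ) :
    ∀ j, HasDerivAt (fun t' => q j t')
      (⟪τ j t, r j t - r (j - 1) t⟫
        - (q j t + q (j + 1) t) / 4 * ‖du j t - r j t‖ ^ 2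
        - (q j t + q (j - 1) t) / 4 * ‖du (j - 1) t - r (j - 1) t‖ ^ 2) t :=
  discrete_length_element_identity_bis_general N u du r q τ hq hτ hqpos hdu hode t
end

section
/- With notation as in the previous item (unit vectors τ_{j-1}, τ_j, τ_{j+1}, their rotations ν_k = τ_k^⊥, positive edge lengths q_{j-1}, q_j, q_{j+1}, reals f_{j-1}, f_j and r_k := f_k · (q_k ν_k + q_{k+1} ν_{k+1})/(q_k + q_{k+1})), for every ε > 0: |τ_j · (r_j − r_{j-1})| ≤ (1/(2ε))(q_{j+1} f_j² + q_{j-1} f_{j-1}²) + (ε/2)|τ_{j+1} − τ_j|²/(q_j+q_{j+1}) + (ε/2)|τ_{j-1} − τ_j|²/(q_j+q_{j-1}). -/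
/-!
Since `τ_j ⊥ ν_j`, only the neighbouring normal contributes:
`τ_j · r_j = f_j q_{j+1}/(q_j+q_{j+1}) · τ_j · (ν_{j+1} - ν_j)`, and rotation by `π/2` preserves lengths,
so `|τ_j · (ν_{j+1} - ν_j)| ≤ |τ_{j+1} - τ_j|`. Each of the two terms of `τ_j · (r_j - r_{j-1})` is
then split by Young's inequality.
-/

open scoped RealInnerProductSpace

/-- Counter-clockwise rotation by 90 degrees in the plane. -/
noncomputable def perp (v : EuclideanSpace ℝ (Fin 2)) : EuclideanSpace ℝ (Fin 2) :=
  WithLp.toLp 2 ![-v 1, v 0]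

lemma perp_sub (a b : EuclideanSpace ℝ (Fin 2)) : perp (a - b) = perp a - perp b := by
  ext i
  fin_cases i <;> simp [perp]; ring

lemma norm_perp (v : EuclideanSpace ℝ (Fin 2)) : ‖perp v‖ = ‖v‖ := by
  simp only [EuclideanSpace.norm_eq, perp, Fin.sum_univ_two]
  norm_num
  ring_nf

lemma inner_perp_self (v : EuclideanSpace ℝ (Fin 2)) : ⟪v, perp v⟫ = 0 := by
  simp only [PiLp.inner_apply, RCLike.inner_apply, conj_trivial, perp, Fin.sum_univ_two]
  norm_num
  ring

lemma abs_inner_perp_sub_le {τ : EuclideanSpace ℝ (Fin 2)} (hτ : ‖τ‖ = 1)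
    (σ : EuclideanSpace ℝ (Fin 2)) : |⟪τ, perp (σ - τ)⟫| ≤ ‖σ - τ‖ := by
  simpa [hτ, norm_perp] using abs_real_inner_le_norm τ (perp (σ - τ))

lemma inner_smul_weighted_perp (τ σ : EuclideanSpace ℝ (Fin 2)) (q q' f : ℝ) :
    ⟪τ, f • ((q + q')⁻¹ • (q • perp τ + q' • perp σ))⟫ =
      f * (q' / (q + q') * ⟪τ, perp (σ - τ)⟫) := by
  simp only [perp_sub, inner_sub_right, real_inner_smul_right, inner_add_right, inner_perp_self]
  ring

lemma mul_weighted_le_young {q q' ε : ℝ} (hq : 0 ≤ q) (hq' : 0 < q') (hε : 0 < ε) (f x : ℝ) :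
    f * (q' / (q + q') * x) ≤ 1 / (2 * ε) * (q' * f ^ 2) + ε / 2 * x ^ 2 / (q + q') := by
  have hqq' : 0 < q + q' := by linarith
  rw [← sub_nonneg]
  have key : 1 / (2 * ε) * (q' * f ^ 2) + ε / 2 * x ^ 2 / (q + q') - f * (q' / (q + q') * x)
      = ((ε * x - f * q') ^ 2 + q * q' * f ^ 2) / (2 * ε * (q + q')) := by
    field_simp
    ring
  rw [key]
  positivity

lemma abs_inner_smul_weighted_perp_le {τ : EuclideanSpace ℝ (Fin 2)} (hτ : ‖τ‖ = 1)
    (σ : EuclideanSpace ℝ (Fin 2)) {q q' ε : ℝ} (hq : 0 ≤ q) (hq' : 0 < q') (hε : 0 < ε) (f : ℝ) :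
    |⟪τ, f • ((q + q')⁻¹ • (q • perp τ + q' • perp σ))⟫| ≤
      1 / (2 * ε) * (q' * f ^ 2) + ε / 2 * ‖σ - τ‖ ^ 2 / (q + q') := by
  rw [inner_smul_weighted_perp]
  set A := ⟪τ, perp (σ - τ)⟫
  have hA : A ^ 2 ≤ ‖σ - τ‖ ^ 2 := by
    simpa only [sq_abs] using pow_le_pow_left₀ (abs_nonneg A) (abs_inner_perp_sub_le hτ σ) 2
  have hqq' : 0 < q + q' := by linarith
  have hmono : ε / 2 * A ^ 2 / (q + q') ≤ ε / 2 * ‖σ - τ‖ ^ 2 / (q + q') := by gcongr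
  have hpos := mul_weighted_le_young hq hq' hε f A
  have hneg := mul_weighted_le_young hq hq' hε (-f) A
  rw [neg_sq] at hneg
  refine abs_le.mpr ⟨?_, ?_⟩ <;> linarith [neg_mul f (q' / (q + q') * A)]

theorem tangent_dot_r_difference_estimate_general
    (τjm τj τjp : EuclideanSpace ℝ (Fin 2))
    (hτj : ‖τj‖ = 1)
    (qjm qj qjp fjm fj ε : ℝ)
    (hqjm : 0 < qjm) (hqj : 0 < qj) (hqjp : 0 < qjp) (hε : 0 < ε) :
    |⟪τj, (fj • ((qj + qjp)⁻¹ • (qj • perp τj + qjp • perp τjp)))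
        - (fjm • ((qjm + qj)⁻¹ • (qjm • perp τjm + qj • perp τj)))⟫| ≤
      1 / (2 * ε) * (qjp * fj ^ 2 + qjm * fjm ^ 2)
        + ε / 2 * ‖τjp - τj‖ ^ 2 / (qj + qjp)
        + ε / 2 * ‖τjm - τj‖ ^ 2 / (qj + qjm) := by
  rw [inner_sub_right, add_comm qjm qj, add_comm (qjm • perp τjm)]
  calc _ ≤ _ := abs_sub _ _
    _ ≤ (1 / (2 * ε) * (qjp * fj ^ 2) + ε / 2 * ‖τjp - τj‖ ^ 2 / (qj + qjp))
          + (1 / (2 * ε) * (qjm * fjm ^ 2) + ε / 2 * ‖τjm - τj‖ ^ 2 / (qj + qjm)) :=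
        add_le_add (abs_inner_smul_weighted_perp_le hτj τjp hqj.le hqjp hε fj)
          (abs_inner_smul_weighted_perp_le hτj τjm hqj.le hqjm hε fjm)
    _ = _ := by ring

/-- Estimate (r-r): with `r_k = f_k (q_k ν_k + q_{k+1} ν_{k+1})/(q_k+q_{k+1})`,
`ν_k = τ_k^⊥`, for every `ε > 0`:
`|τ_j·(r_j - r_{j-1})| ≤ (1/(2ε))(q_{j+1} f_j² + q_{j-1} f_{j-1}²)
  + (ε/2)|τ_{j+1}-τ_j|²/(q_j+q_{j+1}) + (ε/2)|τ_{j-1}-τ_j|²/(q_j+q_{j-1})`. -/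
theorem tangent_dot_r_difference_estimate
    (τjm τj τjp : EuclideanSpace ℝ (Fin 2))
    (hτjm : ‖τjm‖ = 1) (hτj : ‖τj‖ = 1) (hτjp : ‖τjp‖ = 1)
    (qjm qj qjp fjm fj ε : ℝ)
    (hqjm : 0 < qjm) (hqj : 0 < qj) (hqjp : 0 < qjp) (hε : 0 < ε) :
    |⟪τj, (fj • ((qj + qjp)⁻¹ • (qj • perp τj + qjp • perp τjp)))
        - (fjm • ((qjm + qj)⁻¹ • (qjm • perp τjm + qj • perp τj)))⟫| ≤
      1 / (2 * ε) * (qjp * fj ^ 2 + qjm * fjm ^ 2)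
        + ε / 2 * ‖τjp - τj‖ ^ 2 / (qj + qjp)
        + ε / 2 * ‖τjm - τj‖ ^ 2 / (qj + qjm) :=
  tangent_dot_r_difference_estimate_general τjm τj τjp hτj qjm qj qjp fjm fj ε hqjm hqj hqjp hε
end
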